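/- arXiv:2007.06764 — 8 statements merged into one kernel-verified Lean document; each statement's English description precedes it below -/
import Mathlib

section
/- Let μ > 0, ρ ∈ (0,1), and K > 2 with ρ < (K−2)/(2K−2). Then the preemptive-resume cost function 𝒞_PR(φ) = (Kρ + (2−K)φρ(1−ρ)) / (2μ(1−ρ)(1−φρ)) is strictly decreasing in φ on [0,1]. -/
/-! `𝒞_PR` is a linear-fractional function `(a + b φ) / (c + d φ)` of `φ`, so it is strictly
decreasing wherever its denominator is positive exactly when `b c < a d`. Here
`b c - a d = 2μρ(1-ρ) · ((2-K)(1-ρ) + Kρ)`, and the second factor is negative precisely when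
`ρ (2K-2) < K-2`. -/

theorem strictAntiOn_affine_div_affine {a b c d : ℝ} {s : Set ℝ}
    (hden : ∀ x ∈ s, 0 < c + d * x) (h : b * c < a * d) :
    StrictAntiOn (fun x => (a + b * x) / (c + d * x)) s := by
  intro x hx y hy hxy
  rw [div_lt_div_iff₀ (hden y hy) (hden x hx)]
  linear_combination mul_pos (sub_pos.2 h) (sub_pos.2 hxy)

/-- Let `μ > 0`, `ρ ∈ (0,1)`, and `K > 2` with `ρ < (K−2)/(2K−2)`.
Then `𝒞_PR(φ) = (Kρ + (2−K)φρ(1−ρ)) / (2μ(1−ρ)(1−φρ))` is strictly decreasing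
in `φ` on `[0,1]`. -/
theorem cost_PR_strictAntiOn (μ ρ K : ℝ) (hμ : 0 < μ) (hρ0 : 0 < ρ) (hρ1 : ρ < 1)
    (hK : 2 < K) (hρK : ρ < (K - 2) / (2 * K - 2)) :
    StrictAntiOn
      (fun φ : ℝ => (K * ρ + (2 - K) * φ * ρ * (1 - ρ)) / (2 * μ * (1 - ρ) * (1 - φ * ρ)))
      (Set.Icc (0 : ℝ) 1) := by
  have hscale : 0 < 2 * μ * (1 - ρ) := by have := sub_pos.2 hρ1; positivity
  have hload : (2 - K) * (1 - ρ) + K * ρ < 0 := by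
    linarith [(lt_div_iff₀ (by linarith : (0 : ℝ) < 2 * K - 2)).mp hρK]
  have hmono := strictAntiOn_affine_div_affine (s := Set.Icc (0 : ℝ) 1)
    (a := K * ρ) (b := (2 - K) * ρ * (1 - ρ))
    (c := 2 * μ * (1 - ρ)) (d := -(2 * μ * (1 - ρ) * ρ))
    (fun φ hφ => by
      have hφρ : 0 < 1 - ρ * φ := by nlinarith [hφ.2]
      linear_combination mul_pos hscale hφρ)
    (by linear_combination mul_neg_of_pos_of_neg (mul_pos hscale hρ0) hload)
  convert hmono using 3 with φ <;> ring
end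

section
/- Let μ > 0 and K > 2, and set ρ = (K−2)/(2K−2). Then the preemptive-resume cost function 𝒞_PR(φ) = (Kρ + (2−K)φρ(1−ρ)) / (2μ(1−ρ)(1−φρ)) is constant on [0,1], equal to Kρ/(2μ(1−ρ)) for every φ ∈ [0,1]. -/
/-! At `ρ = (K - 2)/(2K - 2)` one has `(2 - K)(1 - ρ) = -Kρ`, so the numerator of `𝒞_PR(φ)`
factors as `Kρ(1 - φρ)` and the `φ`-dependent factor cancels against the denominator. -/

namespace PriorityQueue

lemma load_lt_one {K : ℝ} (hK : 1 < K) : (K - 2) / (2 * K - 2) < 1 := by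
  rw [div_lt_one (by linarith)]
  linarith

lemma one_sub_mul_pos {φ ρ : ℝ} (hφ₀ : 0 ≤ φ) (hφ₁ : φ ≤ 1) (hρ : ρ < 1) :
    0 < 1 - φ * ρ := by
  nlinarith [mul_nonneg hφ₀ (sub_pos.2 hρ).le, mul_nonneg (sub_nonneg.2 hφ₁) (sub_pos.2 hρ).le]

lemma costPR_numerator_eq {K ρ φ : ℝ} (hρ : ρ * (2 * K - 2) = K - 2) :
    K * ρ + (2 - K) * φ * ρ * (1 - ρ) = K * ρ * (1 - φ * ρ) := by
  linear_combination φ * ρ * hρ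

end PriorityQueue

open PriorityQueue in
theorem cost_PR_constant_general (μ ρ K : ℝ) (hK : 2 < K)
    (hρ : ρ = (K - 2) / (2 * K - 2)) :
    ∀ φ ∈ Set.Icc (0 : ℝ) 1,
      (K * ρ + (2 - K) * φ * ρ * (1 - ρ)) / (2 * μ * (1 - ρ) * (1 - φ * ρ)) =
        K * ρ / (2 * μ * (1 - ρ)) := by
  rintro φ ⟨hφ₀, hφ₁⟩
  have hρ_mul : ρ * (2 * K - 2) = K - 2 := by
    rw [hρ, div_mul_cancel₀ _ (by linarith)]
  have hφρ : 1 - φ * ρ ≠ 0 :=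
    (one_sub_mul_pos hφ₀ hφ₁ (hρ ▸ load_lt_one (by linarith))).ne'
  rw [costPR_numerator_eq hρ_mul, mul_div_mul_right _ _ hφρ]

/-- Let `μ > 0` and `K > 2`, and set `ρ = (K−2)/(2K−2)`. Then
`𝒞_PR(φ)` is constant on `[0,1]`, equal to `Kρ/(2μ(1−ρ))` for every `φ ∈ [0,1]`. -/
theorem cost_PR_constant (μ ρ K : ℝ) (hμ : 0 < μ) (hK : 2 < K)
    (hρ : ρ = (K - 2) / (2 * K - 2)) :
    ∀ φ ∈ Set.Icc (0 : ℝ) 1,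
      (K * ρ + (2 - K) * φ * ρ * (1 - ρ)) / (2 * μ * (1 - ρ) * (1 - φ * ρ)) =
        K * ρ / (2 * μ * (1 - ρ)) :=
  cost_PR_constant_general μ ρ K hK hρ
end

section
/- Let μ > 0, ρ ∈ (0,1), K ≥ 1, and suppose either K ≤ 2, or K > 2 and ρ > (K−2)/(2K−2). Then the preemptive-resume cost function 𝒞_PR(φ) = (Kρ + (2−K)φρ(1−ρ)) / (2μ(1−ρ)(1−φρ)) is strictly increasing in φ on [0,1]. -/
/-- Let `μ > 0`, `ρ ∈ (0,1)`, `K ≥ 1`, and suppose either `K ≤ 2`, or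
`K > 2` and `ρ > (K−2)/(2K−2)`. Then
`𝒞_PR(φ) = (Kρ + (2−K)φρ(1−ρ)) / (2μ(1−ρ)(1−φρ))` is strictly increasing in `φ`
on `[0,1]`. -/
theorem cost_PR_strictMonoOn (μ ρ K : ℝ) (hμ : 0 < μ) (hρ0 : 0 < ρ) (hρ1 : ρ < 1)
    (hK : 1 ≤ K) (hcase : K ≤ 2 ∨ (2 < K ∧ (K - 2) / (2 * K - 2) < ρ)) :
    StrictMonoOn
      (fun φ : ℝ => (K * ρ + (2 - K) * φ * ρ * (1 - ρ)) / (2 * μ * (1 - ρ) * (1 - φ * ρ)))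
      (Set.Icc (0 : ℝ) 1) := by
  have hkey : 0 < 2 * ρ * (K - 1) + 2 - K := by
    rcases hcase with h | ⟨h2, hr⟩
    · nlinarith
    · have h2K : 0 < 2 * K - 2 := by linarith
      have := (div_lt_iff₀ h2K).mp hr
      nlinarith
  intro a ha b hb hab
  simp only
  have hda : 0 < 1 - a * ρ := by nlinarith [ha.2]
  have hdb : 0 < 1 - b * ρ := by nlinarith [hb.2]
  have hρ' : 0 < 1 - ρ := by linarith
  have hDa : 0 < 2 * μ * (1 - ρ) * (1 - a * ρ) := by
    apply mul_pos (by nlinarith) hda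
  have hDb : 0 < 2 * μ * (1 - ρ) * (1 - b * ρ) := by
    apply mul_pos (by nlinarith) hdb
  rw [div_lt_div_iff₀ hDa hDb]
  nlinarith [mul_pos hμ hρ0, mul_pos (mul_pos hμ hρ0) (sub_pos.mpr hρ1),
    mul_pos (mul_pos (mul_pos hμ hρ0) (sub_pos.mpr hρ1)) (sub_pos.mpr hab)]
end

section
/- For every ρ ∈ (0,1) and every K with 1 ≤ K ≤ 4, the preemptive-resume revenue function ℛ_PR(φ) = (Kφρ² + (2−K)φ²ρ²(1−ρ)) / (2(1−ρ)(1−φρ)) is strictly increasing in φ on [0,1], so its maximum over [0,1] is ℛ_PR(1) = (Kρ² + (2−K)ρ²(1−ρ)) / (2(1−ρ)²). -/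
/-! For `a < b` in `[0,1]` the difference `ℛ_PR(b) - ℛ_PR(a)` factors as
`ρ²(b - a)(K + (2 - K)(1 - ρ)s) / (2(1 - ρ)(1 - aρ)(1 - bρ))` with `s = a + b - ρab ∈ [0, 2 - ρ]`.
The middle factor is affine in `K`, so it is positive for `K ∈ [1, 4]` because it is positive at
`K = 1`, where it is `1 + (1 - ρ)s`, and at `K = 4`, where it is `4 - 2(1 - ρ)s ≥ 2ρ(3 - ρ)`. -/

noncomputable def revenuePR (ρ K φ : ℝ) : ℝ :=
  (K * φ * ρ ^ 2 + (2 - K) * φ ^ 2 * ρ ^ 2 * (1 - ρ)) / (2 * (1 - ρ) * (1 - φ * ρ))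

section

variable {ρ K : ℝ}

theorem revenuePR_sub {a b : ℝ} (hρ : ρ ≠ 1) (ha : 1 - a * ρ ≠ 0) (hb : 1 - b * ρ ≠ 0) :
    revenuePR ρ K b - revenuePR ρ K a =
      ρ ^ 2 * (b - a) * (K + (2 - K) * (1 - ρ) * (a + b - ρ * a * b)) /
        (2 * (1 - ρ) * (1 - a * ρ) * (1 - b * ρ)) := by
  have hρ' : 1 - ρ ≠ 0 := sub_ne_zero.2 (Ne.symm hρ)
  unfold revenuePR
  rw [div_sub_div _ _ (by positivity) (by positivity), div_eq_div_iff (by positivity)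
    (by positivity)]
  ring

theorem revenuePR_one :
    revenuePR ρ K 1 = (K * ρ ^ 2 + (2 - K) * ρ ^ 2 * (1 - ρ)) / (2 * (1 - ρ) ^ 2) := by
  unfold revenuePR
  ring

end

theorem one_sub_mul_pos {φ ρ : ℝ} (hρ0 : 0 ≤ ρ) (hρ1 : ρ < 1) (hφ : φ ≤ 1) : 0 < 1 - φ * ρ := by
  nlinarith

theorem add_sub_mul_mem_Icc {ρ a b : ℝ} (hρ0 : 0 ≤ ρ) (hρ1 : ρ ≤ 1)
    (ha : a ∈ Set.Icc (0 : ℝ) 1) (hb : b ∈ Set.Icc (0 : ℝ) 1) :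
    a + b - ρ * a * b ∈ Set.Icc 0 (2 - ρ) := by
  obtain ⟨ha0, ha1⟩ := ha
  obtain ⟨hb0, hb1⟩ := hb
  have hρb : 0 ≤ 1 - ρ * b := by nlinarith
  have h1a := sub_nonneg.2 ha1
  have h1b := sub_nonneg.2 hb1
  have h1ρ := sub_nonneg.2 hρ1
  constructor
  · calc (0 : ℝ) ≤ a * (1 - ρ * b) + b := by positivity
      _ = a + b - ρ * a * b := by ring
  · calc a + b - ρ * a * b
        ≤ a + b - ρ * a * b + ((1 - ρ) * ((1 - a) + (1 - b)) + ρ * ((1 - a) * (1 - b))) :=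
          le_add_of_nonneg_right (by positivity)
      _ = 2 - ρ := by ring

theorem revenuePR_slope_factor_pos {ρ K s : ℝ} (hρ0 : 0 < ρ) (hρ1 : ρ < 1) (hK1 : 1 ≤ K)
    (hK4 : K ≤ 4) (hs : s ∈ Set.Icc 0 (2 - ρ)) : 0 < K + (2 - K) * (1 - ρ) * s := by
  obtain ⟨hs0, hs1⟩ := hs
  have h1ρ : 0 < 1 - ρ := sub_pos.2 hρ1
  have hK_one : 0 < 1 + (1 - ρ) * s := by positivity
  have hK_four : 0 < 4 - 2 * (1 - ρ) * s := by
    nlinarith [mul_le_mul_of_nonneg_left hs1 h1ρ.le]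
  have hinterp : 3 * (K + (2 - K) * (1 - ρ) * s) =
      (4 - K) * (1 + (1 - ρ) * s) + (K - 1) * (4 - 2 * (1 - ρ) * s) := by ring
  rcases le_total (1 + (1 - ρ) * s) (4 - 2 * (1 - ρ) * s) with h | h
  · nlinarith [mul_le_mul_of_nonneg_left h (sub_nonneg.2 hK1)]
  · nlinarith [mul_le_mul_of_nonneg_left h (sub_nonneg.2 hK4)]

theorem revenuePR_strictMonoOn {ρ K : ℝ} (hρ0 : 0 < ρ) (hρ1 : ρ < 1) (hK1 : 1 ≤ K)
    (hK4 : K ≤ 4) : StrictMonoOn (revenuePR ρ K) (Set.Icc 0 1) := by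
  intro a ha b hb hab
  have hDa := one_sub_mul_pos hρ0.le hρ1 ha.2
  have hDb := one_sub_mul_pos hρ0.le hρ1 hb.2
  have hfactor := revenuePR_slope_factor_pos hρ0 hρ1 hK1 hK4
    (add_sub_mul_mem_Icc hρ0.le hρ1.le ha hb)
  have h1ρ : 0 < 1 - ρ := sub_pos.2 hρ1
  have hba : 0 < b - a := sub_pos.2 hab
  have hdiff : 0 < revenuePR ρ K b - revenuePR ρ K a := by
    rw [revenuePR_sub hρ1.ne hDa.ne' hDb.ne']
    positivity
  linarith

/-- For every `ρ ∈ (0,1)` and `1 ≤ K ≤ 4`, the PR revenue function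
`ℛ_PR(φ) = (Kφρ² + (2−K)φ²ρ²(1−ρ)) / (2(1−ρ)(1−φρ))` is strictly increasing on `[0,1]`,
so its maximum over `[0,1]` is `ℛ_PR(1) = (Kρ² + (2−K)ρ²(1−ρ)) / (2(1−ρ)²)`. -/
theorem revenue_PR_max_Kle4 (ρ K : ℝ) (hρ0 : 0 < ρ) (hρ1 : ρ < 1) (hK1 : 1 ≤ K)
    (hK4 : K ≤ 4) :
    StrictMonoOn
      (fun φ : ℝ =>
        (K * φ * ρ ^ 2 + (2 - K) * φ ^ 2 * ρ ^ 2 * (1 - ρ)) / (2 * (1 - ρ) * (1 - φ * ρ)))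
      (Set.Icc (0 : ℝ) 1) ∧
    (∀ φ ∈ Set.Icc (0 : ℝ) 1,
      (K * φ * ρ ^ 2 + (2 - K) * φ ^ 2 * ρ ^ 2 * (1 - ρ)) / (2 * (1 - ρ) * (1 - φ * ρ)) ≤
        (K * ρ ^ 2 + (2 - K) * ρ ^ 2 * (1 - ρ)) / (2 * (1 - ρ) ^ 2)) ∧
    (K * 1 * ρ ^ 2 + (2 - K) * 1 ^ 2 * ρ ^ 2 * (1 - ρ)) / (2 * (1 - ρ) * (1 - 1 * ρ)) =
      (K * ρ ^ 2 + (2 - K) * ρ ^ 2 * (1 - ρ)) / (2 * (1 - ρ) ^ 2) := by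
  have hmono := revenuePR_strictMonoOn hρ0 hρ1 hK1 hK4
  refine ⟨hmono, fun φ hφ => ?_, revenuePR_one⟩
  calc revenuePR ρ K φ ≤ revenuePR ρ K 1 :=
        hmono.monotoneOn hφ (Set.right_mem_Icc.2 zero_le_one) hφ.2
    _ = _ := revenuePR_one
end

section
/- Let K > 4 and 0 < ρ < 3/2 − (1/2)√((5K−2)/(K−2)), and let φ^max = (1/ρ)·(1 − √((K−2−2ρ(K−1)) / ((K−2)(1−ρ)))). Then the maximum preemptive-resume revenue satisfies ℛ_PR(φ^max) = (2(K−2) − ρ(3K−4)) / (2(1−ρ)) − (K−2)·√((K−2−2ρ(K−1)) / ((K−2)(1−ρ))), where ℛ_PR(φ) = (Kφρ² + (2−K)φ²ρ²(1−ρ)) / (2(1−ρ)(1−φρ)). -/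
theorem revenuePR_one_sub_div {ρ K s : ℝ} (hρ : ρ ≠ 0) (hρ1 : ρ ≠ 1) (hs : s ≠ 0)
    (hs2 : s ^ 2 * ((K - 2) * (1 - ρ)) = K - 2 - 2 * ρ * (K - 1)) :
    revenuePR ρ K (1 / ρ * (1 - s)) =
      (2 * (K - 2) - ρ * (3 * K - 4)) / (2 * (1 - ρ)) - (K - 2) * s := by
  have h1ρ : 1 - ρ ≠ 0 := sub_ne_zero.mpr (Ne.symm hρ1)
  have hden : 1 - 1 / ρ * (1 - s) * ρ = s := by field_simp; ring
  rw [revenuePR, hden]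
  field_simp
  linear_combination hs2

theorem two_mul_mul_sub_one_lt_sub_two {ρ K : ℝ} (hK : 2 < K)
    (hρK : ρ < 3 / 2 - (1 / 2) * Real.sqrt ((5 * K - 2) / (K - 2))) :
    2 * ρ * (K - 1) < K - 2 := by
  have hK1 : 0 < K - 1 := by linarith
  have hK2 : 0 < K - 2 := by linarith
  have hsqrt : (2 * K - 1) / (K - 1) ≤ Real.sqrt ((5 * K - 2) / (K - 2)) := by
    apply Real.le_sqrt_of_sq_le
    rw [div_pow, div_le_div_iff₀ (by positivity) hK2]
    nlinarith [pow_pos hK1 3]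
  rw [div_le_iff₀ hK1] at hsqrt
  nlinarith

/-- Let `K > 4` and `0 < ρ < 3/2 − (1/2)√((5K−2)/(K−2))`, and let
`φ^max = (1/ρ)(1 − √((K−2−2ρ(K−1))/((K−2)(1−ρ))))`. Then
`ℛ_PR(φ^max) = (2(K−2) − ρ(3K−4))/(2(1−ρ)) − (K−2)√((K−2−2ρ(K−1))/((K−2)(1−ρ)))`. -/
theorem revenue_PR_max_value (ρ K : ℝ) (hρ0 : 0 < ρ) (hK : 4 < K)
    (hρK : ρ < 3 / 2 - (1 / 2) * Real.sqrt ((5 * K - 2) / (K - 2))) :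
    (K * (1 / ρ * (1 - Real.sqrt ((K - 2 - 2 * ρ * (K - 1)) / ((K - 2) * (1 - ρ))))) * ρ ^ 2 +
      (2 - K) *
        (1 / ρ * (1 - Real.sqrt ((K - 2 - 2 * ρ * (K - 1)) / ((K - 2) * (1 - ρ))))) ^ 2
        * ρ ^ 2 * (1 - ρ)) /
      (2 * (1 - ρ) *
        (1 - (1 / ρ * (1 - Real.sqrt ((K - 2 - 2 * ρ * (K - 1)) / ((K - 2) * (1 - ρ))))) * ρ))
    = (2 * (K - 2) - ρ * (3 * K - 4)) / (2 * (1 - ρ)) -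
        (K - 2) * Real.sqrt ((K - 2 - 2 * ρ * (K - 1)) / ((K - 2) * (1 - ρ))) := by
  have hload := two_mul_mul_sub_one_lt_sub_two (by linarith) hρK
  have hρ1 : ρ < 1 := by nlinarith
  have hscale : 0 < (K - 2) * (1 - ρ) := mul_pos (by linarith) (by linarith)
  have hrad : 0 < (K - 2 - 2 * ρ * (K - 1)) / ((K - 2) * (1 - ρ)) :=
    div_pos (by linarith) hscale
  refine revenuePR_one_sub_div hρ0.ne' hρ1.ne (Real.sqrt_pos.mpr hrad).ne' ?_
  rw [Real.sq_sqrt hrad.le, div_mul_cancel₀ _ hscale.ne']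
end

section
/- For every real K > 4, the inequality 3/2 − (1/2)√((5K−2)/(K−2)) < (K−2)/(2K−2) holds. Consequently, whenever K > 4 and ρ ∈ (0, 3/2 − (1/2)√((5K−2)/(K−2))) (the regime in which the PR revenue function is unimodal), one also has ρ < (K−2)/(2K−2) (the regime in which the PR cost function 𝒞_PR(φ) = (Kρ + (2−K)φρ(1−ρ))/(2μ(1−ρ)(1−φρ)) is monotone decreasing, which makes the revenue-maximizing mixed equilibrium stable). -/
/-! Writing the stability threshold as `(K - 2) / (2K - 2) = 3/2 - (1/2) · (2K - 1) / (K - 1)`,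
the claim reduces to `(2K - 1) / (K - 1) < √((5K - 2) / (K - 2))`. After squaring and clearing
denominators the gap is `(5K - 2)(K - 1)² - (2K - 1)²(K - 2) = K³ > 0`. -/

namespace PriorityQueue

lemma sq_mul_lt_mul_sq {K : ℝ} (hK : 0 < K) :
    (2 * K - 1) ^ 2 * (K - 2) < (5 * K - 2) * (K - 1) ^ 2 := by
  have gap : (5 * K - 2) * (K - 1) ^ 2 - (2 * K - 1) ^ 2 * (K - 2) = K ^ 3 := by ring
  linarith [pow_pos hK 3]

lemma div_lt_sqrt_div {K : ℝ} (hK : 2 < K) :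
    (2 * K - 1) / (K - 1) < Real.sqrt ((5 * K - 2) / (K - 2)) := by
  rw [Real.lt_sqrt (div_nonneg (by linarith) (by linarith)), div_pow,
    div_lt_div_iff₀ (by nlinarith) (by linarith)]
  exact sq_mul_lt_mul_sq (by linarith)

lemma stabilityThreshold_eq {K : ℝ} (hK : K ≠ 1) :
    (K - 2) / (2 * K - 2) = 3 / 2 - (1 / 2) * ((2 * K - 1) / (K - 1)) := by
  have hK' : K - 1 ≠ 0 := sub_ne_zero.mpr hK
  have h2K : 2 * K - 2 ≠ 0 := by
    rw [show 2 * K - 2 = 2 * (K - 1) by ring]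
    exact mul_ne_zero two_ne_zero hK'
  field_simp
  ring

lemma unimodalThreshold_lt_stabilityThreshold {K : ℝ} (hK : 2 < K) :
    3 / 2 - (1 / 2) * Real.sqrt ((5 * K - 2) / (K - 2)) < (K - 2) / (2 * K - 2) := by
  rw [stabilityThreshold_eq (by linarith)]
  linarith [div_lt_sqrt_div hK]

end PriorityQueue

/-- For every `K > 4`,
`3/2 − (1/2)√((5K−2)/(K−2)) < (K−2)/(2K−2)`; consequently, whenever `K > 4` and
`ρ ∈ (0, 3/2 − (1/2)√((5K−2)/(K−2)))`, one also has `ρ < (K−2)/(2K−2)`. -/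
theorem unimodal_implies_stable (K : ℝ) (hK : 4 < K) :
    (3 / 2 - (1 / 2) * Real.sqrt ((5 * K - 2) / (K - 2)) < (K - 2) / (2 * K - 2)) ∧
    ∀ ρ : ℝ, 0 < ρ → ρ < 3 / 2 - (1 / 2) * Real.sqrt ((5 * K - 2) / (K - 2)) →
      ρ < (K - 2) / (2 * K - 2) := by
  have hlt := PriorityQueue.unimodalThreshold_lt_stabilityThreshold (show 2 < K by linarith)
  exact ⟨hlt, fun _ _ hρ => hρ.trans hlt⟩
end

section
/- Let μ > 0, ρ ∈ (0,1), and 1 ≤ K < 2. Then the preemptive-resume social welfare function 𝒮_PR(φ) = ρ(K − 2φρ + (2−K)φ(1 − φ(1−ρ))) / (2μ(1−ρ)(1−φρ)) satisfies 𝒮_PR(0) = 𝒮_PR(1) = Kρ/(2μ(1−ρ)), and 𝒮_PR(φ) > Kρ/(2μ(1−ρ)) for every φ ∈ (0,1); that is, the socially optimal (welfare-cost-minimizing) states are exactly the pure states φ = 0 and φ = 1. -/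
/-!
The excess cost of a mixed state over a pure one factors as
`𝒮_PR(φ) - Kρ/(2μ(1-ρ)) = ρ(2-K)φ(1-φ) / (2μ(1-φρ))`, which vanishes at `φ = 0, 1`
and is positive in between exactly when `K < 2`.
-/

/-- The paper's `𝒮_PR(φ)`. -/
noncomputable def welfarePR (μ ρ K φ : ℝ) : ℝ :=
  ρ * (K - 2 * φ * ρ + (2 - K) * φ * (1 - φ * (1 - ρ))) / (2 * μ * (1 - ρ) * (1 - φ * ρ))

theorem welfarePR_sub_pure {μ ρ K φ : ℝ} (hμ : μ ≠ 0) (hρ : 1 - ρ ≠ 0) (hφρ : 1 - φ * ρ ≠ 0) :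
    welfarePR μ ρ K φ - K * ρ / (2 * μ * (1 - ρ)) =
      ρ * (2 - K) * φ * (1 - φ) / (2 * μ * (1 - φ * ρ)) := by
  have hd : 2 * μ * (1 - ρ) * (1 - φ * ρ) ≠ 0 := by simp [hμ, hρ, hφρ]
  have hd0 : 2 * μ * (1 - ρ) ≠ 0 := by simp [hμ, hρ]
  have hd1 : 2 * μ * (1 - φ * ρ) ≠ 0 := by simp [hμ, hφρ]
  rw [welfarePR, div_sub_div _ _ hd hd0, div_eq_div_iff (mul_ne_zero hd hd0) hd1]
  ring

theorem welfarePR_zero {μ ρ K : ℝ} (hμ : μ ≠ 0) (hρ : 1 - ρ ≠ 0) :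
    welfarePR μ ρ K 0 = K * ρ / (2 * μ * (1 - ρ)) := by
  have h := welfarePR_sub_pure (K := K) hμ hρ (φ := 0) (by simp)
  rwa [mul_zero, zero_mul, zero_div, sub_eq_zero] at h

theorem welfarePR_one {μ ρ K : ℝ} (hμ : μ ≠ 0) (hρ : 1 - ρ ≠ 0) :
    welfarePR μ ρ K 1 = K * ρ / (2 * μ * (1 - ρ)) := by
  have h := welfarePR_sub_pure (K := K) hμ hρ (φ := 1) (by rwa [one_mul])
  rwa [sub_self, mul_zero, zero_div, sub_eq_zero] at h

theorem welfarePR_pure_lt {μ ρ K φ : ℝ} (hμ : 0 < μ) (hρ0 : 0 < ρ) (hρ1 : ρ < 1) (hK : K < 2)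
    (hφ : φ ∈ Set.Ioo (0 : ℝ) 1) :
    K * ρ / (2 * μ * (1 - ρ)) < welfarePR μ ρ K φ := by
  obtain ⟨hφ0, hφ1⟩ := hφ
  have hφρ : 0 < 1 - φ * ρ := by nlinarith
  have hexcess := welfarePR_sub_pure (K := K) hμ.ne' (by linarith) hφρ.ne'
  have hpos : 0 < ρ * (2 - K) * φ * (1 - φ) / (2 * μ * (1 - φ * ρ)) := by
    have : 0 < 2 - K := by linarith
    have : 0 < 1 - φ := by linarith
    positivity
  linarith

theorem welfare_PR_Klt2_general (μ ρ K : ℝ) (hμ : 0 < μ) (hρ0 : 0 < ρ) (hρ1 : ρ < 1)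
    (hK2 : K < 2) :
    (ρ * (K - 2 * 0 * ρ + (2 - K) * 0 * (1 - 0 * (1 - ρ))) / (2 * μ * (1 - ρ) * (1 - 0 * ρ)) =
      K * ρ / (2 * μ * (1 - ρ))) ∧
    (ρ * (K - 2 * 1 * ρ + (2 - K) * 1 * (1 - 1 * (1 - ρ))) / (2 * μ * (1 - ρ) * (1 - 1 * ρ)) =
      K * ρ / (2 * μ * (1 - ρ))) ∧
    ∀ φ ∈ Set.Ioo (0 : ℝ) 1,
      ρ * (K - 2 * φ * ρ + (2 - K) * φ * (1 - φ * (1 - ρ))) / (2 * μ * (1 - ρ) * (1 - φ * ρ)) >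
        K * ρ / (2 * μ * (1 - ρ)) := by
  have h1ρ : 1 - ρ ≠ 0 := by linarith
  exact ⟨welfarePR_zero hμ.ne' h1ρ, welfarePR_one hμ.ne' h1ρ,
    fun φ hφ => welfarePR_pure_lt hμ hρ0 hρ1 hK2 hφ⟩

/-- Let `μ > 0`, `ρ ∈ (0,1)`, and `1 ≤ K < 2`. Then the PR social welfare
function `𝒮_PR(φ) = ρ(K − 2φρ + (2−K)φ(1 − φ(1−ρ))) / (2μ(1−ρ)(1−φρ))` satisfies
`𝒮_PR(0) = 𝒮_PR(1) = Kρ/(2μ(1−ρ))` and `𝒮_PR(φ) > Kρ/(2μ(1−ρ))` for every `φ ∈ (0,1)`;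
the socially optimal states are exactly the pure states `φ = 0` and `φ = 1`. -/
theorem welfare_PR_Klt2 (μ ρ K : ℝ) (hμ : 0 < μ) (hρ0 : 0 < ρ) (hρ1 : ρ < 1)
    (hK1 : 1 ≤ K) (hK2 : K < 2) :
    (ρ * (K - 2 * 0 * ρ + (2 - K) * 0 * (1 - 0 * (1 - ρ))) / (2 * μ * (1 - ρ) * (1 - 0 * ρ)) =
      K * ρ / (2 * μ * (1 - ρ))) ∧
    (ρ * (K - 2 * 1 * ρ + (2 - K) * 1 * (1 - 1 * (1 - ρ))) / (2 * μ * (1 - ρ) * (1 - 1 * ρ)) =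
      K * ρ / (2 * μ * (1 - ρ))) ∧
    ∀ φ ∈ Set.Ioo (0 : ℝ) 1,
      ρ * (K - 2 * φ * ρ + (2 - K) * φ * (1 - φ * (1 - ρ))) / (2 * μ * (1 - ρ) * (1 - φ * ρ)) >
        K * ρ / (2 * μ * (1 - ρ)) :=
  welfare_PR_Klt2_general μ ρ K hμ hρ0 hρ1 hK2
end

section
/- Let μ > 0, ρ ∈ (0,1), and K > 2. Then φ* = (1 − √(1−ρ))/ρ lies in (0,1), and it is the unique minimizer of the preemptive-resume social welfare function 𝒮_PR(φ) = ρ(K − 2φρ + (2−K)φ(1 − φ(1−ρ))) / (2μ(1−ρ)(1−φρ)) over [0,1]: 𝒮_PR(φ*) < 𝒮_PR(φ) for every φ ∈ [0,1] with φ ≠ φ*. In particular, when K > 2 the socially optimal state is the mixed ('some join') state φ*, and the all-join state φ = 1 and none-join state φ = 0 are not socially optimal. -/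
/-!
Writing `N(φ) = K − 2φρ + (2−K)φ(1 − φ(1−ρ))` for the numerator of `𝒮_PR`, one has
`N(φ) = 2(1 − φρ) + (K − 2)(1 − φ + (1−ρ)φ²)`, so `𝒮_PR` is an increasing affine function (as
`K > 2`) of `g(φ) = (1 − φ + (1−ρ)φ²)/(1 − φρ)`. With `s = √(1−ρ)` we have `ρ = 1 − s²`,
`φ* = 1/(1+s)`, and the identity
`g(φ) − g(φ*) = s² ((1+s)φ − 1)² / ((1+s)² (1 − φρ))`
exhibits `φ*` as the strict minimizer of `g` wherever `φρ < 1`.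
-/

noncomputable def prWelfare (μ ρ K φ : ℝ) : ℝ :=
  ρ * (K - 2 * φ * ρ + (2 - K) * φ * (1 - φ * (1 - ρ))) / (2 * μ * (1 - ρ) * (1 - φ * ρ))

noncomputable def prExcessFactor (ρ φ : ℝ) : ℝ :=
  (1 - φ + (1 - ρ) * φ ^ 2) / (1 - φ * ρ)

lemma prWelfare_eq {μ ρ K φ : ℝ} (hμ : μ ≠ 0) (hρ : ρ ≠ 1) (hφρ : 1 - φ * ρ ≠ 0) :
    prWelfare μ ρ K φ = ρ / (2 * μ * (1 - ρ)) * (2 + (K - 2) * prExcessFactor ρ φ) := by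
  have hρ' : 1 - ρ ≠ 0 := sub_ne_zero.mpr (Ne.symm hρ)
  unfold prWelfare prExcessFactor
  rw [mul_comm φ ρ] at hφρ ⊢
  field_simp
  ring

lemma prWelfare_lt_of_prExcessFactor_lt {μ ρ K φ ψ : ℝ} (hμ : 0 < μ) (hρ0 : 0 < ρ)
    (hρ1 : ρ < 1) (hK : 2 < K) (hφ : 1 - φ * ρ ≠ 0) (hψ : 1 - ψ * ρ ≠ 0)
    (h : prExcessFactor ρ ψ < prExcessFactor ρ φ) :
    prWelfare μ ρ K ψ < prWelfare μ ρ K φ := by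
  rw [prWelfare_eq hμ.ne' hρ1.ne hφ, prWelfare_eq hμ.ne' hρ1.ne hψ]
  have hscale : 0 < ρ / (2 * μ * (1 - ρ)) := by
    have : 0 < 1 - ρ := sub_pos.mpr hρ1
    positivity
  gcongr

lemma one_sub_sqrt_one_sub_div {ρ : ℝ} (hρ0 : ρ ≠ 0) (hρ1 : ρ ≤ 1) :
    (1 - √(1 - ρ)) / ρ = 1 / (1 + √(1 - ρ)) := by
  have hs2 : √(1 - ρ) ^ 2 = 1 - ρ := Real.sq_sqrt (sub_nonneg.mpr hρ1)
  have hs1 : 0 < 1 + √(1 - ρ) := by positivity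
  rw [div_eq_div_iff hρ0 hs1.ne']
  linear_combination -hs2

lemma prExcessFactor_sub_prExcessFactor_opt {ρ φ : ℝ} (hρ : ρ < 1) (hφ : 1 - φ * ρ ≠ 0) :
    prExcessFactor ρ φ - prExcessFactor ρ (1 / (1 + √(1 - ρ))) =
      √(1 - ρ) ^ 2 * ((1 + √(1 - ρ)) * φ - 1) ^ 2 / ((1 + √(1 - ρ)) ^ 2 * (1 - φ * ρ)) := by
  set s := √(1 - ρ) with hs
  have hs0 : 0 < s := Real.sqrt_pos.mpr (sub_pos.mpr hρ)
  have hρs : ρ = 1 - s ^ 2 := by rw [hs, Real.sq_sqrt (sub_pos.mpr hρ).le]; ring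
  have hopt : 1 - 1 / (1 + s) * ρ = s := by
    rw [hρs]; field_simp; ring
  unfold prExcessFactor
  rw [hopt]
  rw [hρs] at hφ ⊢
  field_simp
  ring

lemma prExcessFactor_opt_lt {ρ φ : ℝ} (hρ : ρ < 1) (hφ : 0 < 1 - φ * ρ)
    (hne : φ ≠ 1 / (1 + √(1 - ρ))) :
    prExcessFactor ρ (1 / (1 + √(1 - ρ))) < prExcessFactor ρ φ := by
  rw [← sub_pos, prExcessFactor_sub_prExcessFactor_opt hρ hφ.ne']
  have hs0 : 0 < √(1 - ρ) := Real.sqrt_pos.mpr (sub_pos.mpr hρ)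
  have hsq : (1 + √(1 - ρ)) * φ - 1 ≠ 0 := by
    intro h
    apply hne
    field_simp
    linarith
  positivity

/-- Let `μ > 0`, `ρ ∈ (0,1)`, and `K > 2`. Then `φ* = (1 − √(1−ρ))/ρ` lies
in `(0,1)`, and it is the unique minimizer of the PR social welfare function
`𝒮_PR(φ) = ρ(K − 2φρ + (2−K)φ(1 − φ(1−ρ))) / (2μ(1−ρ)(1−φρ))` over `[0,1]`. -/
theorem welfare_PR_Kgt2 (μ ρ K : ℝ) (hμ : 0 < μ) (hρ0 : 0 < ρ) (hρ1 : ρ < 1)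
    (hK : 2 < K) :
    ((1 - Real.sqrt (1 - ρ)) / ρ) ∈ Set.Ioo (0 : ℝ) 1 ∧
    ∀ φ ∈ Set.Icc (0 : ℝ) 1, φ ≠ (1 - Real.sqrt (1 - ρ)) / ρ →
      ρ * (K - 2 * ((1 - Real.sqrt (1 - ρ)) / ρ) * ρ +
          (2 - K) * ((1 - Real.sqrt (1 - ρ)) / ρ) *
            (1 - ((1 - Real.sqrt (1 - ρ)) / ρ) * (1 - ρ))) /
        (2 * μ * (1 - ρ) * (1 - ((1 - Real.sqrt (1 - ρ)) / ρ) * ρ)) <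
      ρ * (K - 2 * φ * ρ + (2 - K) * φ * (1 - φ * (1 - ρ))) /
        (2 * μ * (1 - ρ) * (1 - φ * ρ)) := by
  rw [one_sub_sqrt_one_sub_div hρ0.ne' hρ1.le]
  have hs0 : 0 < √(1 - ρ) := Real.sqrt_pos.mpr (sub_pos.mpr hρ1)
  have hopt_pos : 0 < 1 - 1 / (1 + √(1 - ρ)) * ρ := by
    rw [sub_pos, one_div_mul_eq_div, div_lt_one (by positivity)]
    linarith
  refine ⟨⟨by positivity, by rw [div_lt_one (by positivity)]; linarith⟩, ?_⟩
  rintro φ ⟨hφ0, hφ1⟩ hne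
  have hφ : 0 < 1 - φ * ρ := by nlinarith
  show prWelfare μ ρ K _ < prWelfare μ ρ K φ
  exact prWelfare_lt_of_prExcessFactor_lt hμ hρ0 hρ1 hK hφ.ne' hopt_pos.ne'
    (prExcessFactor_opt_lt hρ1 hφ hne)
end
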